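/- Let $X$ be a Banach space, $A$ a densely defined closed operator on $X$, $p \in [1,\infty]$, $r \ge 1$, and let $J_n = (t_{n-1},t_n)$ with $\tau_n = t_n - t_{n-1}$. Suppose $u_\tau \in \mathcal{P}^r(J_n; D(A))$ satisfies the local DG relation $\int_{J_n}\langle \partial_t u_\tau + A u_\tau,\varphi\rangle\,dt + \langle [u_\tau]^{n-1}, \varphi(t_{n-1}^+)\rangle = \int_{J_n}\langle f,\varphi\rangle\,dt$ for all $\varphi \in \mathcal{P}^r(J_n;X')$, where $[u_\tau]^{n-1} = u_\tau(t_{n-1}^+) - u_\tau^{n-1,-}$ for some given $u_\tau^{n-1,-} \in X$. Then $\big\|\tau_n^{-1}[u_\tau]^{n-1}\big\|_X\,\tau_n^{1/p} \le \|\partial_t u_\tau + A u_\tau - f\|_{L^p(J_n;X)}$. -/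

import Mathlib

open MeasureTheory ENNReal

/-!
Testing the DG relation against a constant functional `ψ` gives
`ψ [u] = ∫ ψ (f - ∂ₜu - Au)`. Choosing `ψ` of norm at most one with `ψ [u] = ‖[u]‖`
bounds the jump by the `L¹` norm of the residual, and Hölder's inequality on an interval
of length `τ` turns this into the `Lᵖ` bound.
-/

/-- A function is an `X`-valued polynomial of degree at most `r`. -/
def IsPolyDeg {X : Type*} [NormedAddCommGroup X] [NormedSpace ℝ X]
    (r : ℕ) (f : ℝ → X) : Prop :=
  ∃ c : Fin (r+1) → X, ∀ t : ℝ, f t = ∑ i : Fin (r+1), t ^ (i : ℕ) • c i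

namespace IsPolyDeg

variable {X Y : Type*} [NormedAddCommGroup X] [NormedSpace ℝ X]
  [NormedAddCommGroup Y] [NormedSpace ℝ Y] {r : ℕ} {u : ℝ → X}

theorem const (r : ℕ) (x : X) : IsPolyDeg r (fun _ => x) :=
  ⟨Pi.single 0 x, fun t => by simp [Fin.sum_univ_succ]⟩

theorem linearMap_comp (A : X →ₗ[ℝ] Y) (hu : IsPolyDeg r u) :
    IsPolyDeg r (fun t => A (u t)) := by
  obtain ⟨c, hc⟩ := hu
  exact ⟨fun i => A (c i), fun t => by simp [hc, map_sum]⟩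

theorem contDiff {n : WithTop ℕ∞} (hu : IsPolyDeg r u) : ContDiff ℝ n u := by
  obtain ⟨c, hc⟩ := hu
  rw [funext hc]
  fun_prop

theorem continuous (hu : IsPolyDeg r u) : Continuous u :=
  hu.contDiff (n := 0).continuous

theorem continuous_deriv (hu : IsPolyDeg r u) : Continuous (deriv u) :=
  (hu.contDiff (n := 1)).continuous_deriv le_rfl

end IsPolyDeg

theorem norm_le_integral_norm_of_forall_dual {α X : Type*} [MeasurableSpace α]
    [NormedAddCommGroup X] [NormedSpace ℝ X] {μ : Measure α} {g : α → X} {x : X}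
    (hg : Integrable g μ) (h : ∀ ψ : StrongDual ℝ X, ψ x = ∫ t, ψ (g t) ∂μ) :
    ‖x‖ ≤ ∫ t, ‖g t‖ ∂μ := by
  obtain ⟨ψ, hψ, hψx⟩ := exists_dual_vector'' ℝ x
  calc ‖x‖ = ψ x := by simpa using hψx.symm
    _ = ∫ t, ψ (g t) ∂μ := h ψ
    _ ≤ ∫ t, ‖g t‖ ∂μ := by
      refine integral_mono (ψ.integrable_comp hg) hg.norm fun t => ?_
      calc ψ (g t) ≤ ‖ψ‖ * ‖g t‖ := (le_abs_self _).trans (ψ.le_opNorm _)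
        _ ≤ ‖g t‖ := mul_le_of_le_one_left (norm_nonneg _) hψ

theorem eLpNorm_one_div_measure_mul_rpow_le {α E : Type*} [MeasurableSpace α]
    [NormedAddCommGroup E] {μ : Measure α} [IsFiniteMeasure μ] {p : ℝ≥0∞} (hp : 1 ≤ p)
    {g : α → E} (hg : AEStronglyMeasurable g μ) :
    eLpNorm g 1 μ / μ Set.univ * μ Set.univ ^ p.toReal⁻¹ ≤ eLpNorm g p μ := by
  obtain hμ | hμ := eq_or_ne (μ Set.univ) 0
  · simp [Measure.measure_univ_eq_zero.mp hμ]
  have hμ_top : μ Set.univ ≠ ∞ := measure_ne_top μ _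
  have holder := eLpNorm_le_eLpNorm_mul_rpow_measure_univ hp hg
  set m := μ Set.univ
  calc eLpNorm g 1 μ / m * m ^ p.toReal⁻¹
      ≤ eLpNorm g p μ * m ^ (1 - p.toReal⁻¹) / m * m ^ p.toReal⁻¹ := by
        gcongr; simpa using holder
    _ = eLpNorm g p μ * m ^ (1 - p.toReal⁻¹ + -1 + p.toReal⁻¹) := by
        rw [ENNReal.rpow_add _ _ hμ hμ_top, ENNReal.rpow_add _ _ hμ hμ_top,
          ENNReal.rpow_neg_one, div_eq_mul_inv]
        ring
    _ = eLpNorm g p μ := by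
        rw [show 1 - p.toReal⁻¹ + -1 + p.toReal⁻¹ = 0 by ring, ENNReal.rpow_zero, mul_one]

theorem stmt_12_general {X : Type*} [NormedAddCommGroup X] [NormedSpace ℝ X]
    (r : ℕ) (p : ℝ≥0∞) (hp : 1 ≤ p)
    (A : X →ₗ[ℝ] X) (a b : ℝ) (hab : a < b)
    (u : ℝ → X) (hu : IsPolyDeg r u) (um : X)
    (f : ℝ → X) (hf : MemLp f p (volume.restrict (Set.Ioo a b)))
    (hDG : ∀ φ : ℝ → StrongDual ℝ X, IsPolyDeg r φ →
      (∫ t in a..b, φ t (deriv u t + A (u t))) + φ a (u a - um)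
        = ∫ t in a..b, φ t (f t)) :
    ENNReal.ofReal (‖u a - um‖ / (b - a)) * ENNReal.ofReal (b - a) ^ p.toReal⁻¹
      ≤ eLpNorm (fun t => deriv u t + A (u t) - f t) p (volume.restrict (Set.Ioo a b)) := by
  set μ := volume.restrict (Set.Ioo a b)
  set q := fun t => deriv u t + A (u t)
  have hμ : μ Set.univ = ENNReal.ofReal (b - a) := by simp [μ]
  have hq : Integrable q μ :=
    (hu.continuous_deriv.add (hu.linearMap_comp A).continuous).integrableOn_Icc.mono_set
      Set.Ioo_subset_Icc_self
  have hf₁ : Integrable f μ := hf.integrable hp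
  have h_interval (g : ℝ → ℝ) : ∫ t in a..b, g t = ∫ t, g t ∂μ := by
    rw [intervalIntegral.integral_of_le hab.le, integral_Ioc_eq_integral_Ioo]
  have hjump (ψ : StrongDual ℝ X) : ψ (u a - um) = ∫ t, ψ (f t - q t) ∂μ := by
    have h := hDG (fun _ => ψ) (IsPolyDeg.const r ψ)
    simp only [h_interval, map_sub] at h ⊢
    rw [integral_sub (ψ.integrable_comp hf₁) (ψ.integrable_comp hq)]
    linarith
  have hnorm : ENNReal.ofReal ‖u a - um‖ ≤ eLpNorm (fun t => q t - f t) 1 μ := by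
    rw [eLpNorm_one_eq_lintegral_enorm,
      ← ofReal_integral_norm_eq_lintegral_enorm (f := fun t => q t - f t) (hq.sub hf₁)]
    refine ENNReal.ofReal_le_ofReal ?_
    calc ‖u a - um‖ ≤ ∫ t, ‖f t - q t‖ ∂μ :=
          norm_le_integral_norm_of_forall_dual (g := fun t => f t - q t) (hf₁.sub hq) hjump
      _ = ∫ t, ‖q t - f t‖ ∂μ := by simp_rw [norm_sub_rev]
  calc ENNReal.ofReal (‖u a - um‖ / (b - a)) * ENNReal.ofReal (b - a) ^ p.toReal⁻¹
      ≤ eLpNorm (fun t => q t - f t) 1 μ / μ Set.univ * μ Set.univ ^ p.toReal⁻¹ := by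
        rw [ENNReal.ofReal_div_of_pos (sub_pos.2 hab), hμ]
        gcongr
    _ ≤ _ := eLpNorm_one_div_measure_mul_rpow_le hp (hq.sub hf₁).aestronglyMeasurable

theorem stmt_12 {X : Type*} [NormedAddCommGroup X] [NormedSpace ℝ X] [CompleteSpace X]
    (r : ℕ) (hr : 1 ≤ r) (p : ℝ≥0∞) (hp : 1 ≤ p)
    (A : X →ₗ[ℝ] X) (a b : ℝ) (hab : a < b)
    (u : ℝ → X) (hu : IsPolyDeg r u) (um : X)
    (f : ℝ → X) (hf : MemLp f p (volume.restrict (Set.Ioo a b)))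
    (hDG : ∀ φ : ℝ → StrongDual ℝ X, IsPolyDeg r φ →
      (∫ t in a..b, φ t (deriv u t + A (u t))) + φ a (u a - um)
        = ∫ t in a..b, φ t (f t)) :
    ENNReal.ofReal (‖u a - um‖ / (b - a)) * ENNReal.ofReal (b - a) ^ p.toReal⁻¹
      ≤ eLpNorm (fun t => deriv u t + A (u t) - f t) p (volume.restrict (Set.Ioo a b)) :=
  stmt_12_general r p hp A a b hab u hu um f hf hDG
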